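/- Let c : ℕ → ℍ with Σ_n |c_n|² < ∞ and let I ∈ 𝕊. Then for every 0 ≤ r < 1, (1/2π) ∫₀^{2π} |F_c(r e^{It})|² dt = Σ_n r^{2n} |c_n|², and consequently sup_{0 ≤ r < 1} (1/2π) ∫₀^{2π} |F_c(r e^{It})|² dt = Σ_n |c_n|². -/

import Mathlib

noncomputable section

local notation "ℍ" => Quaternion ℝ

/-- The power series function `F_c(q) = Σ_n q^n c_n` associated to a coefficient
sequence `c : ℕ → ℍ`. -/
def Fc (c : ℕ → ℍ) (q : ℍ) : ℍ := ∑' n, q ^ n * c n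

/-- Cauchy product `(b ⋆ c)_n = Σ_{k=0}^n b_k c_{n-k}` of coefficient sequences,
i.e. the coefficient sequence of the slice `*`-product. -/
def cprod (b c : ℕ → ℍ) : ℕ → ℍ := fun n => ∑ k ∈ Finset.range (n + 1), b k * c (n - k)

/-- Coefficient sequence `ε(a)_n = √(1-|a|²) conj(a)^n` of the slice normalized
Szegő kernel `e_a`. -/
def eps (a : ℍ) : ℕ → ℍ := fun n => Real.sqrt (1 - ‖a‖ ^ 2) • (star a) ^ n

open scoped Classical in
/-- Coefficient sequence `β(a)` of the slice Blaschke factor `B_a`: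
`β(a)_0 = a²/|a|`, `β(a)_n = -conj(a)^{n-1}(1-|a|²)(a/|a|)` for `n ≥ 1`,
with the convention `β(0)_n = 1` iff `n = 1` (that is, `B_0(q) = q`). -/
def betaC (a : ℍ) : ℕ → ℍ :=
  if a = 0 then fun n => if n = 1 then 1 else 0
  else fun n =>
    if n = 0 then a ^ 2 / (‖a‖ : ℍ)
    else -((star a) ^ (n - 1) * ((1 - ‖a‖ ^ 2 : ℝ) : ℍ) * (a / (‖a‖ : ℍ)))

/-- The identity for the Cauchy product: coefficient sequence of the constant `1`. -/
def deltaSeq : ℕ → ℍ := fun n => if n = 0 then 1 else 0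

/-- Coefficient sequence of the Blaschke product `B_{a_0} * ⋯ * B_{a_{k-1}}`
(0-indexed; `Bprod a 0` is the empty product, i.e. the constant `1`). -/
def Bprod (a : ℕ → ℍ) : ℕ → (ℕ → ℍ)
  | 0 => deltaSeq
  | k + 1 => cprod (Bprod a k) (betaC (a k))

/-- Coefficient sequence of the `k`-th slice Takenaka–Malmquist function
`T_{k+1} = B_{a_0} * ⋯ * B_{a_{k-1}} * e_{a_k}` (0-indexed). -/
def tau (a : ℕ → ℍ) (k : ℕ) : ℕ → ℍ := cprod (Bprod a k) (eps (a k))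

/-- `e^{It} = cos t + I sin t`. -/
def expI (I : ℍ) (t : ℝ) : ℍ := ((Real.cos t : ℝ) : ℍ) + ((Real.sin t : ℝ) : ℍ) * I


/-!
On the slice `ℂ_I` the point `r e^{It}` computes like a complex number: `(r e^{It})ⁿ = rⁿ e^{Int}`,
and `⟪e^{Ins} a, e^{Iu} b⟫ = cos (s - u) ⟪a, b⟫ + sin (s - u) ⟪I a, b⟫`, so the functions
`t ↦ e^{Int} cₙ` are orthogonal on `[0, 2π]` with squared norms `2π |cₙ|²`. For `r < 1` the
series `F_c(r e^{It}) = Σ rⁿ e^{Int} cₙ` is dominated by `Σ rⁿ |cₙ|`, so `|F_c|²` expands into an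
absolutely convergent double series of inner products that can be integrated termwise; only the
diagonal survives. The supremum over `r` is then an Abel-type limit, obtained from Tannery's theorem
since the means are dominated by `Σ |cₙ|²`.
-/

open scoped RealInnerProductSpace

theorem Quaternion.re_mul_comm (a b : ℍ) : (a * b).re = (b * a).re := by
  simp only [Quaternion.re_mul]; ring

theorem Quaternion.star_eq_neg_of_sq_eq_neg_one {I : ℍ} (hI : I ^ 2 = -1) : star I = -I := by
  have hnorm : ‖I‖ ^ 2 = 1 := by rw [← norm_pow, hI, norm_neg, norm_one]
  refine Quaternion.star_eq_neg.2 (Quaternion.sq_eq_neg_normSq.1 ?_)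
  rw [hI, Quaternion.normSq_eq_norm_mul_self, ← sq, hnorm, Quaternion.coe_one]

section ExpI

variable {I : ℍ}

theorem expI_eq_smul (t : ℝ) : expI I t = Real.cos t • (1 : ℍ) + Real.sin t • I := by
  rw [expI, Quaternion.coe_mul_eq_smul, ← Quaternion.coe_one, Quaternion.smul_coe, mul_one]

theorem expI_mul_eq_smul (t : ℝ) (a : ℍ) :
    expI I t * a = Real.cos t • a + Real.sin t • (I * a) := by
  rw [expI_eq_smul, add_mul, smul_mul_assoc, smul_mul_assoc, one_mul]

theorem expI_zero : expI I 0 = 1 := by simp [expI]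

theorem continuous_expI : Continuous (expI I) := by
  have := Quaternion.continuous_coe
  unfold expI
  fun_prop

theorem expI_add (hI : I ^ 2 = -1) (s t : ℝ) : expI I (s + t) = expI I s * expI I t := by
  have hII : I * I = -1 := by rw [← sq, hI]
  simp only [expI_eq_smul, add_mul, mul_add, smul_mul_assoc, mul_smul_comm, one_mul, mul_one, hII,
    smul_neg, Real.cos_add, Real.sin_add]
  module

theorem star_expI (hI : I ^ 2 = -1) (t : ℝ) : star (expI I t) = expI I (-t) := by
  simp only [expI_eq_smul, Real.cos_neg, Real.sin_neg, star_add, Quaternion.star_smul, star_one,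
    Quaternion.star_eq_neg_of_sq_eq_neg_one hI, smul_neg, neg_smul]

theorem norm_expI (hI : I ^ 2 = -1) (t : ℝ) : ‖expI I t‖ = 1 := by
  have h : expI I t * star (expI I t) = 1 := by
    rw [star_expI hI, ← expI_add hI, add_neg_cancel, expI_zero]
  have := congrArg norm h
  rw [norm_mul, norm_star, norm_one, ← sq] at this
  exact (pow_eq_one_iff_of_nonneg (norm_nonneg _) two_ne_zero).1 this

theorem expI_pow (hI : I ^ 2 = -1) (t : ℝ) (n : ℕ) : expI I t ^ n = expI I (n * t) := by
  induction n with
  | zero => simp [expI_zero]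
  | succ n ih => rw [pow_succ, ih, ← expI_add hI]; push_cast; ring_nf

theorem ofReal_mul_expI_pow (hI : I ^ 2 = -1) (r t : ℝ) (n : ℕ) :
    ((r : ℍ) * expI I t) ^ n = ((r ^ n : ℝ) : ℍ) * expI I (n * t) := by
  rw [(Quaternion.coe_commute r _).mul_pow, expI_pow hI, Quaternion.coe_pow]

theorem inner_expI_mul_expI_mul (hI : I ^ 2 = -1) (s u : ℝ) (a b : ℍ) :
    ⟪expI I s * a, expI I u * b⟫ = Real.cos (s - u) * ⟪a, b⟫ + Real.sin (s - u) * ⟪I * a, b⟫ := by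
  calc ⟪expI I s * a, expI I u * b⟫
      = (star (expI I u) * expI I s * (a * star b)).re := by
        rw [Quaternion.inner_def, star_mul, ← mul_assoc, Quaternion.re_mul_comm]
        simp only [mul_assoc]
    _ = (expI I (s - u) * (a * star b)).re := by
        rw [star_expI hI, ← expI_add hI, neg_add_eq_sub]
    _ = Real.cos (s - u) * ⟪a, b⟫ + Real.sin (s - u) * ⟪I * a, b⟫ := by
        rw [expI_mul_eq_smul, Quaternion.inner_def, Quaternion.inner_def, mul_assoc]
        simp

end ExpI

theorem integral_cos_int_mul (k : ℤ) :
    ∫ t in (0 : ℝ)..2 * Real.pi, Real.cos (k * t) = if k = 0 then 2 * Real.pi else 0 := by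
  rcases eq_or_ne k 0 with rfl | hk
  · simp
  · have hk' : (k : ℝ) ≠ 0 := Int.cast_ne_zero.2 hk
    rw [if_neg hk, intervalIntegral.integral_comp_mul_left (fun t => Real.cos t) hk', integral_cos,
      mul_zero, Real.sin_zero, Real.sin_periodic.int_mul_eq, Real.sin_zero]
    simp

theorem integral_sin_int_mul (k : ℤ) :
    ∫ t in (0 : ℝ)..2 * Real.pi, Real.sin (k * t) = 0 := by
  rcases eq_or_ne k 0 with rfl | hk
  · simp
  · have hk' : (k : ℝ) ≠ 0 := Int.cast_ne_zero.2 hk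
    rw [intervalIntegral.integral_comp_mul_left (fun t => Real.sin t) hk', integral_sin,
      mul_zero, Real.cos_zero, Real.cos_int_mul_two_pi]
    simp

theorem integral_inner_expI_mul_expI_mul {I : ℍ} (hI : I ^ 2 = -1) (n m : ℕ) (a b : ℍ) :
    ∫ t in (0 : ℝ)..2 * Real.pi, ⟪expI I (n * t) * a, expI I (m * t) * b⟫
      = if n = m then 2 * Real.pi * ⟪a, b⟫ else 0 := by
  have hk : ∀ t : ℝ, (n : ℝ) * t - m * t = ((n - m : ℤ) : ℝ) * t := fun t => by push_cast; ring
  simp only [inner_expI_mul_expI_mul hI, hk]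
  rw [intervalIntegral.integral_add ((by fun_prop : Continuous _).intervalIntegrable _ _)
      ((by fun_prop : Continuous _).intervalIntegrable _ _),
    intervalIntegral.integral_mul_const, intervalIntegral.integral_mul_const,
    integral_cos_int_mul, integral_sin_int_mul]
  simp only [sub_eq_zero, Int.natCast_inj]
  split_ifs <;> ring

section InnerSeries

variable {E : Type*} [NormedAddCommGroup E] [InnerProductSpace ℝ E]

theorem HasSum.inner_prod {ι κ : Type*} {x : ι → E} {y : κ → E} {s t : E} (hx : HasSum x s)
    (hy : HasSum y t) (hxy : Summable fun p : ι × κ => ⟪x p.1, y p.2⟫) :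
    HasSum (fun p : ι × κ => ⟪x p.1, y p.2⟫) ⟪s, t⟫ := by
  obtain ⟨u, hu⟩ := hxy
  have hrows : HasSum (fun i => ⟪x i, t⟫) u :=
    hu.prod_fiberwise fun i => hy.mapL (innerSL ℝ (x i))
  have hu' : ⟪s, t⟫ = u := (hx.mapL ((innerSL ℝ).flip t)).unique hrows
  rwa [hu']

open MeasureTheory in
theorem hasSum_integral_inner_of_norm_le [CompleteSpace E] {ι α : Type*} [Countable ι]
    [MeasurableSpace α] {μ : Measure α} [IsFiniteMeasure μ] {x : ι → α → E} {b : ι → ℝ}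
    (hx : ∀ i, AEStronglyMeasurable (x i) μ) (hb : Summable b) (hxb : ∀ i a, ‖x i a‖ ≤ b i) :
    HasSum (fun p : ι × ι => ∫ a, ⟪x p.1 a, x p.2 a⟫ ∂μ) (∫ a, ‖∑' i, x i a‖ ^ 2 ∂μ) := by
  have hb2 : Summable fun p : ι × ι => |b p.1| * |b p.2| :=
    hb.abs.mul_of_nonneg hb.abs (fun _ => abs_nonneg _) (fun _ => abs_nonneg _)
  have hinner : ∀ a (p : ι × ι), ‖⟪x p.1 a, x p.2 a⟫‖ ≤ |b p.1| * |b p.2| := fun a p =>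
    (norm_inner_le_norm _ _).trans <| mul_le_mul ((hxb _ a).trans (le_abs_self _))
      ((hxb _ a).trans (le_abs_self _)) (norm_nonneg _) (abs_nonneg _)
  refine hasSum_integral_of_dominated_convergence (fun p _ => |b p.1| * |b p.2|)
    (fun p => (hx p.1).inner (hx p.2)) (fun p => ae_of_all _ fun a => hinner a p)
    (ae_of_all _ fun _ => hb2) (integrable_const _) (ae_of_all _ fun a => ?_)
  have hsum : HasSum (x · a) (∑' i, x i a) := (hb.of_norm_bounded fun i => hxb i a).hasSum
  rw [← real_inner_self_eq_norm_sq]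
  exact hsum.inner_prod hsum (hb2.of_norm_bounded (hinner a))

end InnerSeries

open MeasureTheory in
theorem hasSum_integral_norm_Fc_sq {I : ℍ} (hI : I ^ 2 = -1) {c : ℕ → ℍ} {r : ℝ} (hr : 0 ≤ r)
    (hc : Summable fun n => r ^ n * ‖c n‖) :
    HasSum (fun n => 2 * Real.pi * (r ^ (2 * n) * ‖c n‖ ^ 2))
      (∫ t in (0 : ℝ)..2 * Real.pi, ‖Fc c ((r : ℍ) * expI I t)‖ ^ 2) := by
  set x : ℕ → ℝ → ℍ := fun n t => ((r : ℍ) * expI I t) ^ n * c n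
  have hx : ∀ n t, x n t = ((r ^ n : ℝ) : ℍ) * (expI I (n * t) * c n) := fun n t => by
    simp only [x, ofReal_mul_expI_pow hI, mul_assoc]
  have hxnorm : ∀ n t, ‖x n t‖ = r ^ n * ‖c n‖ := fun n t => by
    rw [hx, norm_mul, norm_mul, Quaternion.norm_coe, norm_expI hI, one_mul, Real.norm_eq_abs,
      abs_of_nonneg (pow_nonneg hr n)]
  have hpairs := hasSum_integral_inner_of_norm_le (x := x)
    (μ := volume.restrict (Set.Ioc 0 (2 * Real.pi)))
    (fun n => ((continuous_const.mul continuous_expI).pow n |>.mul continuous_const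
      |>.aestronglyMeasurable)) hc (fun n t => (hxnorm n t).le)
  have hpair : ∀ n m, ∫ t in (0 : ℝ)..2 * Real.pi, ⟪x n t, x m t⟫
      = if n = m then 2 * Real.pi * (r ^ (2 * n) * ‖c n‖ ^ 2) else 0 := fun n m => by
    simp only [hx, Quaternion.coe_mul_eq_smul, real_inner_smul_left, real_inner_smul_right,
      intervalIntegral.integral_const_mul, integral_inner_expI_mul_expI_mul hI]
    split_ifs with h
    · subst h; rw [real_inner_self_eq_norm_sq]; ring
    · simp
  simp only [← intervalIntegral.integral_of_le Real.two_pi_pos.le, hpair] at hpairs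
  have hdiag := (Function.Injective.hasSum_iff (g := fun n : ℕ => (n, n))
    (fun _ _ h => (Prod.mk.inj h).1) ?_).2 hpairs
  · simp only [Function.comp_def, if_true] at hdiag
    exact hdiag
  · rintro ⟨n, m⟩ hnm
    exact if_neg fun h => hnm ⟨n, Prod.ext rfl h⟩

theorem summable_pow_mul_norm_of_summable_sq {E : Type*} [SeminormedAddCommGroup E] {c : ℕ → E}
    (hc : Summable fun n => ‖c n‖ ^ 2) {r : ℝ} (hr0 : 0 ≤ r) (hr1 : r < 1) :
    Summable fun n => r ^ n * ‖c n‖ := by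
  have hgeom : Summable fun n => (r ^ 2) ^ n :=
    summable_geometric_of_lt_one (sq_nonneg r) (by nlinarith)
  -- AM-GM: `rⁿ |cₙ| ≤ ((r²)ⁿ + |cₙ|²) / 2`
  refine Summable.of_nonneg_of_le (fun n => by positivity) (fun n => ?_)
    ((hgeom.add hc).div_const 2)
  rw [← pow_mul, mul_comm 2 n, pow_mul]
  nlinarith [sq_nonneg (r ^ n - ‖c n‖)]

theorem inv_two_pi_mul_integral_norm_Fc_sq {I : ℍ} (hI : I ^ 2 = -1) {c : ℕ → ℍ}
    (hc : Summable fun n => ‖c n‖ ^ 2) {r : ℝ} (hr0 : 0 ≤ r) (hr1 : r < 1) :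
    (2 * Real.pi)⁻¹ * ∫ t in (0 : ℝ)..(2 * Real.pi), ‖Fc c ((r : ℍ) * expI I t)‖ ^ 2
      = ∑' n, r ^ (2 * n) * ‖c n‖ ^ 2 := by
  rw [← (hasSum_integral_norm_Fc_sq hI hr0
      (summable_pow_mul_norm_of_summable_sq hc hr0 hr1)).tsum_eq,
    tsum_mul_left, inv_mul_cancel_left₀ Real.two_pi_pos.ne']

open Filter Topology in
theorem sSup_image_tsum_pow_mul {a : ℕ → ℝ} (ha0 : ∀ n, 0 ≤ a n) (ha : Summable a) (k : ℕ) :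
    sSup ((fun r : ℝ => ∑' n, r ^ (k * n) * a n) '' Set.Ico 0 1) = ∑' n, a n := by
  have hle : ∀ r ∈ Set.Ico (0 : ℝ) 1, ∀ n, r ^ (k * n) * a n ≤ a n := fun r hr n =>
    mul_le_of_le_one_left (ha0 n) (pow_le_one₀ hr.1 hr.2.le)
  have hIco : ∀ᶠ r in 𝓝[<] (1 : ℝ), r ∈ Set.Ico 0 1 := Ico_mem_nhdsLT zero_lt_one
  have hlim : Tendsto (fun r : ℝ => ∑' n, r ^ (k * n) * a n) (𝓝[<] 1) (𝓝 (∑' n, a n)) := by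
    refine tendsto_tsum_of_dominated_convergence ha (fun n => ?_) ?_
    · have hcont : Continuous fun r : ℝ => r ^ (k * n) * a n := by fun_prop
      simpa using (hcont.tendsto 1).mono_left nhdsWithin_le_nhds
    · filter_upwards [hIco] with r hr n
      rw [Real.norm_of_nonneg (mul_nonneg (pow_nonneg hr.1 _) (ha0 n))]
      exact hle r hr n
  refine csSup_eq_of_forall_le_of_forall_lt_exists_gt ⟨_, 0, ⟨le_rfl, one_pos⟩, rfl⟩ ?_ ?_
  · rintro _ ⟨r, hr, rfl⟩
    have hsum : Summable fun n => r ^ (k * n) * a n :=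
      ha.of_nonneg_of_le (fun n => mul_nonneg (pow_nonneg hr.1 _) (ha0 n)) (hle r hr)
    exact hsum.tsum_le_tsum (hle r hr) ha
  · intro w hw
    obtain ⟨r, hr, hwr⟩ := (hIco.and (hlim.eventually (lt_mem_nhds hw))).exists
    exact ⟨_, ⟨r, hr, rfl⟩, hwr⟩

/-- the norm identity for the slice Hardy space `H²(𝔹_I)`. -/
theorem hardy_norm_identity (c : ℕ → ℍ) (hc : Summable fun n => ‖c n‖ ^ 2)
    (I : ℍ) (hI : I ^ 2 = -1) :
    (∀ r : ℝ, 0 ≤ r → r < 1 →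
      (2 * Real.pi)⁻¹ * ∫ t in (0 : ℝ)..(2 * Real.pi), ‖Fc c ((r : ℍ) * expI I t)‖ ^ 2
        = ∑' n, r ^ (2 * n) * ‖c n‖ ^ 2) ∧
    sSup ((fun r : ℝ =>
        (2 * Real.pi)⁻¹ * ∫ t in (0 : ℝ)..(2 * Real.pi), ‖Fc c ((r : ℍ) * expI I t)‖ ^ 2) ''
          Set.Ico (0 : ℝ) 1)
      = ∑' n, ‖c n‖ ^ 2 := by
  refine ⟨fun r hr0 hr1 => inv_two_pi_mul_integral_norm_Fc_sq hI hc hr0 hr1, ?_⟩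
  rw [Set.image_congr fun r hr => inv_two_pi_mul_integral_norm_Fc_sq hI hc hr.1 hr.2]
  exact sSup_image_tsum_pow_mul (fun n => sq_nonneg _) hc 2
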